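/- Let (F_n, T_n, q_n) be an odometer datum with inverse limit Z and induced odometer T : Z → Z. Suppose there exist m ≥ 1 and n₀ ∈ ℕ such that for every n ≥ n₀ the permutation T_n has exactly m orbits on F_n. Then Z is the disjoint union of m nonempty clopen T-invariant subsets, and the restriction of T to each of these subsets is minimal (every orbit in the subset is dense in it). -/

import Mathlib

/-!
Split `Z` according to the `T n₀`-orbit of the `n₀`-th coordinate; these pieces are cylinders,
hence clopen, and are `T`-invariant. Since `q n` semiconjugates `T (n + 1)` to `T n` and is onto,
it maps orbits onto orbits; as both levels have `m` orbits, two points of `F (n + 1)` lie in one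
orbit as soon as their images do. So for two points `z, w` of one piece and every `n ≥ n₀`, some
`T ^ k z` agrees with `w` up to level `n`, and these cylinders form a neighbourhood basis of `w`.
The pieces are nonempty because the projections `Z → F n` are onto.
-/

/-- A set `s ⊆ F` is an orbit of the permutation `T` if it is the full `ℤ`-orbit of
some point. -/
def IsOrbitOf {F : Type*} (T : Equiv.Perm F) (s : Set F) : Prop :=
  ∃ x : F, s = Set.range fun k : ℤ => (T ^ k) x

/-- The odometer induced on the inverse limit
`Z = { z ∈ ∏ n, F n | ∀ n, q n (z (n+1)) = z n }`
by a compatible sequence of bijections `T n : F n ≃ F n`. -/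
def odoPerm (F : ℕ → Type*) (T : ∀ n, Equiv.Perm (F n)) (q : ∀ n, F (n + 1) → F n)
    (hcomm : ∀ n x, q n (T (n + 1) x) = T n (q n x)) :
    Equiv.Perm { z : ∀ n, F n // ∀ n, q n (z (n + 1)) = z n } where
  toFun z := ⟨fun n => T n (z.1 n), fun n => by rw [hcomm, z.2]⟩
  invFun z := ⟨fun n => (T n).symm (z.1 n), fun n => by
    rw [Equiv.eq_symm_apply, ← hcomm, Equiv.apply_symm_apply, z.2]⟩
  left_inv z := Subtype.ext (funext fun n => (T n).symm_apply_apply _)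
  right_inv z := Subtype.ext (funext fun n => (T n).apply_symm_apply _)

open Function Equiv Filter

theorem Function.Semiconj.perm_zpow {α β : Type*} {p : α → β} {f : Perm α} {g : Perm β}
    (h : Semiconj p f g) (k : ℤ) : Semiconj p ⇑(f ^ k) ⇑(g ^ k) := by
  have hpow : ∀ n : ℕ, Semiconj p ⇑(f ^ n) ⇑(g ^ n) := fun n => by
    simpa only [Perm.coe_pow] using h.iterate_right n
  cases k with
  | ofNat n => simpa only [Int.ofNat_eq_natCast, zpow_natCast] using hpow n
  | negSucc n =>
    rw [zpow_negSucc, zpow_negSucc]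
    exact (hpow (n + 1)).inverses_right (f ^ (n + 1)).apply_symm_apply
      (g ^ (n + 1)).symm_apply_apply

namespace Equiv.Perm

variable {α β : Type*}

theorem SameCycle.map {p : α → β} {f : Perm α} {g : Perm β} (h : Semiconj p f g) {x y : α}
    (hxy : f.SameCycle x y) : g.SameCycle (p x) (p y) := by
  obtain ⟨k, rfl⟩ := hxy
  exact ⟨k, (h.perm_zpow k x).symm⟩

theorem natCard_isOrbitOf (f : Perm α) :
    Nat.card {s : Set α // IsOrbitOf f s} = Nat.card (Quotient (SameCycle.setoid f)) := by
  let orbit : α → Set α := fun x => {y | f.SameCycle x y}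
  have hker : ∀ x y, (SameCycle.setoid f) x y ↔ (Setoid.ker orbit) x y := fun x y =>
    ⟨fun h => Set.ext fun z => ⟨h.symm.trans, h.trans⟩,
      fun h => (congrArg (y ∈ ·) h).mpr (SameCycle.refl f y)⟩
  have hrange : {s : Set α // IsOrbitOf f s} ≃ Set.range orbit :=
    subtypeEquivRight fun s => exists_congr fun x => eq_comm
  exact Nat.card_congr <|
    hrange.trans ((Setoid.quotientKerEquivRange orbit).symm.trans (Quotient.congrRight hker).symm)

theorem SameCycle.of_map [Finite α] {p : α → β} (hp : Surjective p) {f : Perm α} {g : Perm β}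
    (h : Semiconj p f g)
    (hcard : Nat.card {s : Set α // IsOrbitOf f s} = Nat.card {s : Set β // IsOrbitOf g s})
    {x y : α} (hxy : g.SameCycle (p x) (p y)) : f.SameCycle x y := by
  -- `p` induces a surjection between finite sets of orbits of equal size, hence a bijection
  let φ : Quotient (SameCycle.setoid f) → Quotient (SameCycle.setoid g) :=
    Quotient.map p fun _ _ => SameCycle.map h
  have hφ : Surjective φ := by
    rintro ⟨b⟩
    obtain ⟨a, rfl⟩ := hp b
    exact ⟨⟦a⟧, _root_.rfl⟩
  rw [natCard_isOrbitOf, natCard_isOrbitOf] at hcard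
  have hφinj := ((Nat.bijective_iff_surjective_and_card φ).2 ⟨hφ, hcard⟩).1
  exact Quotient.exact (hφinj (Quotient.sound hxy : φ ⟦x⟧ = φ ⟦y⟧))

end Equiv.Perm

abbrev InvLimit (F : ℕ → Type*) (q : ∀ n, F (n + 1) → F n) : Type _ :=
  { z : ∀ n, F n // ∀ n, q n (z (n + 1)) = z n }

namespace InvLimit

theorem exists_apply_eq {F : ℕ → Type*} {q : ∀ n, F (n + 1) → F n}
    (hq : ∀ n, Surjective (q n)) (N : ℕ) (x : F N) : ∃ z : InvLimit F q, z.1 N = x := by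
  induction N generalizing F with
  | zero =>
    exact ⟨⟨fun n => Nat.rec (motive := F) x (fun n y => surjInv (hq n) y) n,
      fun n => surjInv_eq (hq n) _⟩, rfl⟩
  | succ N ih =>
    -- apply the induction hypothesis to the shifted system and prepend one coordinate
    obtain ⟨z, hz⟩ := ih (F := fun n => F (n + 1)) (q := fun n => q (n + 1)) (fun n => hq _) x
    refine ⟨⟨fun | 0 => q 0 (z.1 0) | n + 1 => z.1 n, ?_⟩, hz⟩
    rintro (_ | n)
    · rfl
    · exact z.2 n

variable {F : ℕ → Type*} {q : ∀ n, F (n + 1) → F n}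

theorem apply_eq_of_le {z w : InvLimit F q} {n : ℕ} (h : z.1 n = w.1 n) {a : ℕ} (ha : a ≤ n) :
    z.1 a = w.1 a := by
  induction ha using Nat.decreasingInduction with
  | self => exact h
  | of_succ k _ ih => rw [← z.2 k, ← w.2 k, ih]

theorem mem_closure_of_eventually [∀ n, TopologicalSpace (F n)] [∀ n, DiscreteTopology (F n)]
    {S : Set (InvLimit F q)} {w : InvLimit F q} (h : ∀ᶠ n in atTop, ∃ v ∈ S, v.1 n = w.1 n) :
    w ∈ closure S := by
  rw [mem_closure_iff_nhds]
  intro t ht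
  obtain ⟨u, hu, hut⟩ := mem_nhds_subtype _ _ _ |>.1 ht
  rw [nhds_pi, Filter.mem_pi] at hu
  obtain ⟨I, hI, c, hc, hIc⟩ := hu
  obtain ⟨b, hb⟩ := hI.bddAbove
  obtain ⟨n, ⟨v, hvS, hv⟩, hn⟩ := (h.and (eventually_ge_atTop b)).exists
  refine ⟨v, hut (hIc fun i hi => ?_), hvS⟩
  rw [apply_eq_of_le hv ((hb hi).trans hn)]
  exact mem_of_mem_nhds (by simpa only [nhds_discrete, mem_pure] using hc i)

end InvLimit

section Odometer

variable {F : ℕ → Type*} {T : ∀ n, Perm (F n)} {q : ∀ n, F (n + 1) → F n}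
  (hcomm : ∀ n x, q n (T (n + 1) x) = T n (q n x))
include hcomm

theorem odoPerm_zpow_apply (k : ℤ) (z : InvLimit F q) (n : ℕ) :
    ((odoPerm F T q hcomm ^ k) z).1 n = (T n ^ k) (z.1 n) :=
  (show Semiconj (fun z : InvLimit F q => z.1 n) (odoPerm F T q hcomm) (T n) from
    fun _ => rfl).perm_zpow k z

theorem InvLimit.sameCycle_of_le [∀ n, Finite (F n)] (hq : ∀ n, Surjective (q n)) {m n₀ : ℕ}
    (horb : ∀ n ≥ n₀, Nat.card {s : Set (F n) // IsOrbitOf (T n) s} = m) {z w : InvLimit F q}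
    (h : (T n₀).SameCycle (z.1 n₀) (w.1 n₀)) {n : ℕ} (hn : n₀ ≤ n) :
    (T n).SameCycle (z.1 n) (w.1 n) := by
  induction n, hn using Nat.le_induction with
  | base => exact h
  | succ n hn ih =>
    refine Perm.SameCycle.of_map (hq n) (fun x => hcomm n x) ?_ ?_
    · rw [horb (n + 1) (by omega), horb n hn]
    · rwa [z.2 n, w.2 n]

theorem mem_closure_range_odoPerm_zpow [∀ n, TopologicalSpace (F n)]
    [∀ n, DiscreteTopology (F n)] {z w : InvLimit F q}
    (h : ∀ᶠ n in atTop, (T n).SameCycle (z.1 n) (w.1 n)) :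
    w ∈ closure (Set.range fun k : ℤ => (odoPerm F T q hcomm ^ k) z) :=
  InvLimit.mem_closure_of_eventually <| h.mono fun n ⟨k, hk⟩ =>
    ⟨_, ⟨k, rfl⟩, (odoPerm_zpow_apply hcomm k z n).trans hk⟩

end Odometer

theorem odometer_eventually_m_orbits_decomposition_general
    (F : ℕ → Type*) [∀ n, TopologicalSpace (F n)] [∀ n, DiscreteTopology (F n)]
    [∀ n, Fintype (F n)]
    (T : ∀ n, Equiv.Perm (F n)) (q : ∀ n, F (n + 1) → F n)
    (hq : ∀ n, Function.Surjective (q n))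
    (hcomm : ∀ n x, q n (T (n + 1) x) = T n (q n x))
    (m : ℕ) (n₀ : ℕ)
    (horb : ∀ n ≥ n₀, Nat.card { s : Set (F n) // IsOrbitOf (T n) s } = m) :
    ∃ C : Fin m → Set { z : ∀ n, F n // ∀ n, q n (z (n + 1)) = z n },
      (∀ i, (C i).Nonempty) ∧
      (∀ i, IsClopen (C i)) ∧
      Pairwise (Function.onFun Disjoint C) ∧
      (⋃ i, C i) = Set.univ ∧
      (∀ i, (odoPerm F T q hcomm) '' (C i) = C i) ∧
      (∀ i, ∀ z ∈ C i,
        C i ⊆ closure (Set.range fun k : ℤ => ((odoPerm F T q hcomm) ^ k) z)) := by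
  have hcard : Nat.card (Quotient (Perm.SameCycle.setoid (T n₀))) = m := by
    rw [← Perm.natCard_isOrbitOf, horb n₀ le_rfl]
  let e := (Finite.equivFin _).trans (finCongr hcard)
  let orbitIndex : InvLimit F q → Fin m := fun z => e ⟦z.1 n₀⟧
  have hcont : Continuous orbitIndex :=
    (continuous_of_discreteTopology (f := fun x : F n₀ => e ⟦x⟧)).comp
      ((continuous_apply n₀).comp continuous_subtype_val)
  have hinv : ∀ z, orbitIndex (odoPerm F T q hcomm z) = orbitIndex z := fun z =>
    congrArg e (Quotient.sound (Perm.sameCycle_apply_left.2 (Perm.SameCycle.refl _ _)))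
  refine ⟨fun i => orbitIndex ⁻¹' {i}, fun i => ?_, fun i => (isClopen_discrete _).preimage hcont,
    pairwise_disjoint_fiber orbitIndex,
    Set.eq_univ_of_forall fun z => Set.mem_iUnion.2 ⟨_, rfl⟩, fun i => ?_,
    fun i z hz w hw => mem_closure_range_odoPerm_zpow hcomm ?_⟩
  · obtain ⟨x, hx⟩ := Quotient.exists_rep (e.symm i)
    obtain ⟨z, hz⟩ := InvLimit.exists_apply_eq hq n₀ x
    exact ⟨z, show e ⟦z.1 n₀⟧ = i by rw [hz, hx, e.apply_symm_apply]⟩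
  · ext z
    rw [Equiv.image_eq_preimage_symm, Set.mem_preimage, Set.mem_preimage, ← hinv,
      Equiv.apply_symm_apply, Set.mem_preimage]
  · have h₀ : (T n₀).SameCycle (z.1 n₀) (w.1 n₀) :=
      Quotient.exact (e.injective (hz.trans hw.symm))
    exact eventually_atTop.2 ⟨n₀, fun n => InvLimit.sameCycle_of_le hcomm hq horb h₀⟩

/-- **Case (2) of Theorem 5.3 (dynamical core).**
Let `(F n, T n, q n)` be an odometer datum with inverse limit `Z` and induced odometer
`T`.  If there are `m ≥ 1` and `n₀` such that for every `n ≥ n₀` the permutation `T n`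
has exactly `m` orbits on `F n`, then `Z` is the disjoint union of `m` nonempty clopen
`T`-invariant subsets, on each of which `T` is minimal (every orbit is dense in it). -/
theorem odometer_eventually_m_orbits_decomposition
    (F : ℕ → Type*) [∀ n, TopologicalSpace (F n)] [∀ n, DiscreteTopology (F n)]
    [∀ n, Fintype (F n)] [∀ n, Nonempty (F n)]
    (T : ∀ n, Equiv.Perm (F n)) (q : ∀ n, F (n + 1) → F n)
    (hq : ∀ n, Function.Surjective (q n))
    (hcomm : ∀ n x, q n (T (n + 1) x) = T n (q n x))
    (m : ℕ) (hm : 1 ≤ m) (n₀ : ℕ)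
    (horb : ∀ n ≥ n₀, Nat.card { s : Set (F n) // IsOrbitOf (T n) s } = m) :
    ∃ C : Fin m → Set { z : ∀ n, F n // ∀ n, q n (z (n + 1)) = z n },
      (∀ i, (C i).Nonempty) ∧
      (∀ i, IsClopen (C i)) ∧
      Pairwise (Function.onFun Disjoint C) ∧
      (⋃ i, C i) = Set.univ ∧
      (∀ i, (odoPerm F T q hcomm) '' (C i) = C i) ∧
      (∀ i, ∀ z ∈ C i,
        C i ⊆ closure (Set.range fun k : ℤ => ((odoPerm F T q hcomm) ^ k) z)) :=
  odometer_eventually_m_orbits_decomposition_general F T q hq hcomm m n₀ horb
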